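/- arXiv:1406.1708 — 5 statements merged into one kernel-verified Lean document; each statement's English description precedes it below -/
import Mathlib

section
/- Assume T ≠ ∅ and suppose (U^dir, U^lin) is a solution to the dual cone projection problem (P*) such that L_𝒟 ∩ R* ≠ {0}, where L_𝒟 := span{p(M⁻¹w) : (u,w) ∈ U^lin}. Then there does not exist a maximizer for (VLP*): no point (ū,w̄) ∈ T satisfies D(ū,w̄) ∉ D[T] − R*∖{0}, and no direction (ū,w̄) ∈ (0⁺T)∖{0} satisfies D(ū,w̄) ∉ D[0⁺T] − R*∖{0}. -/
open Matrix Set Pointwise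

noncomputable section

/-- `cone B = {l • x : l ≥ 0, x ∈ conv B}` -/
def coneOf {E : Type*} [AddCommGroup E] [Module ℝ E] (B : Set E) : Set E :=
  {y | ∃ l : ℝ, 0 ≤ l ∧ ∃ x ∈ convexHull ℝ B, y = l • x}

/-- `F` is a face of the convex set `B`. -/
def IsFaceOf {E : Type*} [AddCommGroup E] [Module ℝ E] (F B : Set E) : Prop :=
  Convex ℝ F ∧ F ⊆ B ∧
    ∀ y ∈ B, ∀ z ∈ B, ∀ l : ℝ, 0 < l → l < 1 → l • y + (1 - l) • z ∈ F → y ∈ F ∧ z ∈ F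

/-- recession cone `0⁺B` of a convex set. -/
def recCone {E : Type*} [AddCommGroup E] [Module ℝ E] (B : Set E) : Set E :=
  {d | ∀ x ∈ B, ∀ t : ℝ, 0 ≤ t → x + t • d ∈ B}

/-- lineality space `L(B) = 0⁺B ∩ (−0⁺B)`. -/
def linealOf {E : Type*} [AddCommGroup E] [Module ℝ E] (B : Set E) : Set E :=
  recCone B ∩ -recCone B

/-- dimension of (the affine hull of) a set. -/
def sdim {E : Type*} [AddCommGroup E] [Module ℝ E] (B : Set E) : ℕ :=
  Module.finrank ℝ (vectorSpan ℝ B)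

def IsPolyhedron {d : ℕ} (B : Set (Fin d → ℝ)) : Prop :=
  ∃ (k : ℕ) (W : Matrix (Fin k) (Fin d) ℝ) (v : Fin k → ℝ), B = {x | v ≤ W.mulVec x}

/-- orthogonal complement (as a set) of a set of vectors. -/
def orthSet {d : ℕ} (L : Set (Fin d → ℝ)) : Set (Fin d → ℝ) :=
  {y | ∀ z ∈ L, y ⬝ᵥ z = 0}

/-- polar cone `K° = {w : ∀ y ∈ K, wᵀy ≤ 0}`. -/
def polarCone {d : ℕ} (K : Set (Fin d → ℝ)) : Set (Fin d → ℝ) :=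
  {w | ∀ y ∈ K, w ⬝ᵥ y ≤ 0}

/-- the last index of `Fin q` (1-based index `q`). -/
def lastIdx (q : ℕ) (hq : 0 < q) : Fin q := ⟨q - 1, by omega⟩

/-- `y ↦ (y,1)`. -/
def lift1 {q : ℕ} (y : Fin q → ℝ) : Fin (q + 1) → ℝ := Fin.snoc y 1

/-- `y ↦ (y,0)`. -/
def lift0 {q : ℕ} (y : Fin q → ℝ) : Fin (q + 1) → ℝ := Fin.snoc y 0

/-- `p(y) = (y₁,…,y_q)`. -/
def projq {q : ℕ} (y : Fin (q + 1) → ℝ) : Fin q → ℝ := fun i => y i.castSucc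

/-- `Φ(B) = cl cone (B × {1})`. -/
def PhiMap {q : ℕ} (B : Set (Fin q → ℝ)) : Set (Fin (q + 1) → ℝ) :=
  closure (coneOf (lift1 '' B))

/-- the block matrix `G = (A; −ZᵀP; 0)`. -/
def Gmat {m n q r : ℕ} (A : Matrix (Fin m) (Fin n) ℝ) (P : Matrix (Fin q) (Fin n) ℝ)
    (Z : Matrix (Fin q) (Fin r) ℝ) : Matrix (Fin (m + r + 1)) (Fin n) ℝ :=
  fun i j =>
    if h : (i : ℕ) < m then A ⟨i, h⟩ j
    else if h2 : (i : ℕ) < m + r then -(∑ l : Fin q, Z l ⟨(i : ℕ) - m, by omega⟩ * P l j)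
    else 0

/-- the block matrix `H` with rows `(0, −b)`, `(Zᵀ, 0)` and `(0,…,0,1)`. -/
def Hmat {m q r : ℕ} (b : Fin m → ℝ) (Z : Matrix (Fin q) (Fin r) ℝ) :
    Matrix (Fin (m + r + 1)) (Fin (q + 1)) ℝ :=
  fun i j =>
    if h : (i : ℕ) < m then (if (j : ℕ) = q then -b ⟨i, h⟩ else 0)
    else if h2 : (i : ℕ) < m + r then
      (if hj : (j : ℕ) < q then Z ⟨j, hj⟩ ⟨(i : ℕ) - m, by omega⟩ else 0)
    else (if (j : ℕ) = q then 1 else 0)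

/-- dual objective `D(u,w) = (w₁,…,w_{q−1}, bᵀu)`. -/
def Dmap {m q : ℕ} (b : Fin m → ℝ) (uw : (Fin m → ℝ) × (Fin q → ℝ)) : Fin q → ℝ :=
  fun i => if (i : ℕ) < q - 1 then uw.2 i else b ⬝ᵥ uw.1

/-- `R* = {v : v₁ = ⋯ = v_{q−1} = 0, v_q ≥ 0}`. -/
def RstarSet (q : ℕ) (hq : 0 < q) : Set (Fin q → ℝ) :=
  {v | (∀ i : Fin q, (i : ℕ) < q - 1 → v i = 0) ∧ 0 ≤ v (lastIdx q hq)}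

/-- dual feasible set `T`. -/
def Tset {m n q r : ℕ} (A : Matrix (Fin m) (Fin n) ℝ) (P : Matrix (Fin q) (Fin n) ℝ)
    (Z : Matrix (Fin q) (Fin r) ℝ) (cbar : Fin q → ℝ) :
    Set ((Fin m → ℝ) × (Fin q → ℝ)) :=
  {uw | ∃ v : Fin r → ℝ, 0 ≤ v ∧ uw.2 = Z.mulVec v ∧
    Aᵀ.mulVec uw.1 = Pᵀ.mulVec uw.2 ∧ cbar ⬝ᵥ uw.2 = 1 ∧ 0 ≤ uw.1}

/-- `φ(y,w) = Σ_{i<q} y_i w_i + y_q (1 − Σ_{i<q} c̄_i w_i) − w_q`. -/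
def phiFn {q : ℕ} (hq : 0 < q) (cbar : Fin q → ℝ) (y w : Fin q → ℝ) : ℝ :=
  (∑ i : Fin q, if (i : ℕ) < q - 1 then y i * w i else 0)
    + y (lastIdx q hq) * (1 - ∑ i : Fin q, if (i : ℕ) < q - 1 then cbar i * w i else 0)
    - w (lastIdx q hq)

/-- duality map `Ψ(F*) = ⋂_{w ∈ F*} {y ∈ Pset : φ(y,w) = 0}`. -/
def PsiMap {q : ℕ} (hq : 0 < q) (cbar : Fin q → ℝ) (Pset : Set (Fin q → ℝ))
    (Fstar : Set (Fin q → ℝ)) : Set (Fin q → ℝ) :=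
  ⋂ w ∈ Fstar, {y ∈ Pset | phiFn hq cbar y w = 0}

/-- `My = (−y₁,…,−y_{q−1}, c̄₁y₁+⋯+c̄_{q−1}y_{q−1} − y_{q+1}, y_q)`. -/
def Mmap {q : ℕ} (hq : 0 < q) (cbar : Fin q → ℝ) (y : Fin (q + 1) → ℝ) : Fin (q + 1) → ℝ :=
  fun i =>
    if (i : ℕ) < q - 1 then -y i
    else if (i : ℕ) = q - 1 then
      (∑ j : Fin q, if (j : ℕ) < q - 1 then cbar j * y j.castSucc else 0) - y (Fin.last q)
    else y ((lastIdx q hq).castSucc)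

/-- `M⁻¹w = (−w₁,…,−w_{q−1}, w_{q+1}, −cᵀw)` where `c = (c̄,0)`. -/
def MinvMap {q : ℕ} (cbar : Fin q → ℝ) (w : Fin (q + 1) → ℝ) : Fin (q + 1) → ℝ :=
  fun i =>
    if (i : ℕ) < q - 1 then -w i
    else if (i : ℕ) = q - 1 then w (Fin.last q)
    else -((Fin.snoc cbar 0 : Fin (q + 1) → ℝ) ⬝ᵥ w)

/-- `p*(w) = (w₁,…,w_{q−1},w_{q+1})`. -/
def pstarMap {q : ℕ} (w : Fin (q + 1) → ℝ) : Fin q → ℝ :=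
  fun i => if (i : ℕ) < q - 1 then w i.castSucc else w (Fin.last q)

/-- `y` generates an extreme ray of the pointed convex cone `Q`. -/
def IsExtremeDir {E : Type*} [AddCommGroup E] [Module ℝ E] (Q : Set E) (y : E) : Prop :=
  y ∈ Q ∧ y ≠ 0 ∧ IsFaceOf (coneOf {y}) Q

/-- `σ(u,w) = (u¹, −p(w))` where `u = (u¹,u²,u³) ∈ ℝ^m×ℝ^r×ℝ`. -/
def sigmaMap {m q r : ℕ} (uw : (Fin (m + r + 1) → ℝ) × (Fin (q + 1) → ℝ)) :
    (Fin m → ℝ) × (Fin q → ℝ) :=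
  (fun i => uw.1 (Fin.castLE (by omega) i), -projq uw.2)

section Helpers
open Finset

lemma sum_split {m r : ℕ} (f : Fin (m + r + 1) → ℝ) :
    ∑ i, f i = (∑ i : Fin m, f ⟨i, by omega⟩) + (∑ k : Fin r, f ⟨m + k, by omega⟩)
      + f ⟨m + r, by omega⟩ := by
  rw [Fin.sum_univ_castSucc, Fin.sum_univ_add]
  rfl

lemma Ht_lt {m q r : ℕ} (b : Fin m → ℝ) (Z : Matrix (Fin q) (Fin r) ℝ)
    (u : Fin (m + r + 1) → ℝ) (j : Fin (q + 1)) (hj : (j : ℕ) < q) :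
    ((Hmat b Z)ᵀ.mulVec u) j = Z.mulVec (fun k => u ⟨m + k, by omega⟩) ⟨j, hj⟩ := by
  simp only [Matrix.mulVec, dotProduct, Matrix.transpose_apply]
  rw [sum_split (fun i => Hmat b Z i j * u i)]
  have h1 : (∑ i : Fin m, Hmat b Z ⟨(i:ℕ), by omega⟩ j * u ⟨(i:ℕ), by omega⟩) = 0 := by
    apply Finset.sum_eq_zero; intro i _
    simp only [Hmat]
    rw [dif_pos (show ((⟨(i:ℕ), by omega⟩ : Fin (m+r+1)) : ℕ) < m from i.isLt),
      if_neg (by omega), zero_mul]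
  have h3 : Hmat b Z ⟨m + r, by omega⟩ j * u ⟨m + r, by omega⟩ = 0 := by
    simp only [Hmat]
    rw [dif_neg (by simp), dif_neg (by simp), if_neg (by omega), zero_mul]
  rw [h1, h3, zero_add, add_zero]
  apply Finset.sum_congr rfl; intro k _
  congr 1
  simp only [Hmat]
  rw [dif_neg (by simp), dif_pos (show ((⟨m + (k:ℕ), by omega⟩ : Fin (m+r+1)) : ℕ) < m + r by
    simpa using k.isLt), dif_pos hj]
  congr 1
  ext
  simp

lemma Ht_last {m q r : ℕ} (b : Fin m → ℝ) (Z : Matrix (Fin q) (Fin r) ℝ)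
    (u : Fin (m + r + 1) → ℝ) (j : Fin (q + 1)) (hj : (j : ℕ) = q) :
    ((Hmat b Z)ᵀ.mulVec u) j
      = -(b ⬝ᵥ fun i : Fin m => u ⟨i, by omega⟩) + u ⟨m + r, by omega⟩ := by
  simp only [Matrix.mulVec, dotProduct, Matrix.transpose_apply]
  rw [sum_split (fun i => Hmat b Z i j * u i)]
  have h2 : (∑ k : Fin r, Hmat b Z ⟨m + (k:ℕ), by omega⟩ j * u ⟨m + (k:ℕ), by omega⟩) = 0 := by
    apply Finset.sum_eq_zero; intro k _
    simp only [Hmat]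
    rw [dif_neg (by simp), dif_pos (show m + (k:ℕ) < m + r by simpa using k.isLt),
      dif_neg (by omega), zero_mul]
  have h3 : Hmat b Z ⟨m + r, by omega⟩ j * u ⟨m + r, by omega⟩ = u ⟨m + r, by omega⟩ := by
    simp only [Hmat]
    rw [dif_neg (by simp), dif_neg (by simp), if_pos hj, one_mul]
  have h1 : (∑ i : Fin m, Hmat b Z ⟨(i:ℕ), by omega⟩ j * u ⟨(i:ℕ), by omega⟩)
      = -∑ i : Fin m, b i * u ⟨(i:ℕ), by omega⟩ := by
    rw [← Finset.sum_neg_distrib]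
    apply Finset.sum_congr rfl; intro i _
    simp only [Hmat]
    rw [dif_pos (show ((⟨(i:ℕ), by omega⟩ : Fin (m+r+1)) : ℕ) < m from i.isLt), if_pos hj,
      neg_mul]
  rw [h1, h2, h3, add_zero]

lemma Gt_eq {m n q r : ℕ} (A : Matrix (Fin m) (Fin n) ℝ) (P : Matrix (Fin q) (Fin n) ℝ)
    (Z : Matrix (Fin q) (Fin r) ℝ) (u : Fin (m + r + 1) → ℝ) (j : Fin n) :
    ((Gmat A P Z)ᵀ.mulVec u) j
      = Aᵀ.mulVec (fun i : Fin m => u ⟨i, by omega⟩) j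
        - Pᵀ.mulVec (Z.mulVec (fun k : Fin r => u ⟨m + k, by omega⟩)) j := by
  simp only [Matrix.mulVec, dotProduct, Matrix.transpose_apply]
  rw [sum_split (fun i => Gmat A P Z i j * u i)]
  have h3 : Gmat A P Z ⟨m + r, by omega⟩ j * u ⟨m + r, by omega⟩ = 0 := by
    simp only [Gmat]
    rw [dif_neg (by simp), dif_neg (by simp), zero_mul]
  have h1 : (∑ i : Fin m, Gmat A P Z ⟨(i:ℕ), by omega⟩ j * u ⟨(i:ℕ), by omega⟩)
      = ∑ i : Fin m, A i j * u ⟨(i:ℕ), by omega⟩ := by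
    apply Finset.sum_congr rfl; intro i _
    simp only [Gmat]
    rw [dif_pos (show ((⟨(i:ℕ), by omega⟩ : Fin (m+r+1)) : ℕ) < m from i.isLt)]
  have h2 : (∑ k : Fin r, Gmat A P Z ⟨m + (k:ℕ), by omega⟩ j * u ⟨m + (k:ℕ), by omega⟩)
      = -∑ l : Fin q, P l j * ∑ k : Fin r, Z l k * u ⟨m + (k:ℕ), by omega⟩ := by
    have hent : ∀ k : Fin r, Gmat A P Z ⟨m + (k:ℕ), by omega⟩ j
        = -(∑ l : Fin q, Z l k * P l j) := by
      intro k
      simp only [Gmat]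
      rw [dif_neg (by simp), dif_pos (show m + (k:ℕ) < m + r by simpa using k.isLt)]
      simp [Nat.add_sub_cancel_left]
    calc (∑ k : Fin r, Gmat A P Z ⟨m + (k:ℕ), by omega⟩ j * u ⟨m + (k:ℕ), by omega⟩)
        = ∑ k : Fin r, -(∑ l : Fin q, Z l k * P l j) * u ⟨m + (k:ℕ), by omega⟩ :=
          Finset.sum_congr rfl fun k _ => by rw [hent k]
      _ = -∑ l : Fin q, P l j * ∑ k : Fin r, Z l k * u ⟨m + (k:ℕ), by omega⟩ := by
          simp only [neg_mul, Finset.sum_neg_distrib, neg_inj, Finset.sum_mul, Finset.mul_sum]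
          rw [Finset.sum_comm]
          apply Finset.sum_congr rfl; intro k _
          apply Finset.sum_congr rfl; intro l _
          ring
  rw [h1, h2, h3, add_zero]
  ring

end Helpers

/-- `w ↦ p(M⁻¹ w)` as a linear map. -/
def Lmap (q : ℕ) (cbar : Fin q → ℝ) : (Fin (q + 1) → ℝ) →ₗ[ℝ] (Fin q → ℝ) where
  toFun w := projq (MinvMap cbar w)
  map_add' x y := by
    funext i
    simp only [projq, MinvMap, Pi.add_apply, dotProduct_add]
    split_ifs <;> ring
  map_smul' t x := by
    funext i
    simp only [projq, MinvMap, Pi.smul_apply, smul_eq_mul, RingHom.id_apply,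
      dotProduct_smul]
    split_ifs <;> ring
/-- If a solution of (P*) violates `L_𝒟 ∩ R* = {0}`, then (VLP*) has no
maximizer. -/
theorem stmt11
    (m n q r : ℕ) (hm : 0 < m) (hn : 0 < n) (hq : 0 < q) (hr : 0 < r)
    (A : Matrix (Fin m) (Fin n) ℝ) (P : Matrix (Fin q) (Fin n) ℝ)
    (Z : Matrix (Fin q) (Fin r) ℝ) (b : Fin m → ℝ)
    (C : Set (Fin q → ℝ)) (hC : C = {y | 0 ≤ Zᵀ.mulVec y})
    (hCpointed : C ∩ -C = {0}) (hCnontriv : C ≠ {0})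
    (S : Set (Fin n → ℝ)) (hS : S = {x | b ≤ A.mulVec x}) (hSne : S.Nonempty)
    (cbar : Fin q → ℝ) (hcbar : cbar ∈ intrinsicInterior ℝ C)
    (hcq : cbar (lastIdx q hq) = 1)
    (c : Fin (q + 1) → ℝ) (hc : c = Fin.snoc cbar 0)
    (T : Set ((Fin m → ℝ) × (Fin q → ℝ))) (hT : T = Tset A P Z cbar) (hTne : T.Nonempty)
    (Kstar : Set (Fin (q + 1) → ℝ))
    (hKstar : Kstar = {w | ∃ u : Fin (m + r + 1) → ℝ, 0 ≤ u ∧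
      w = -((Hmat b Z)ᵀ.mulVec u) ∧ (Gmat A P Z)ᵀ.mulVec u = 0})
    -- `(Udir, Ulin)` is a solution of (P*):
    (Udir Ulin : Set ((Fin (m + r + 1) → ℝ) × (Fin (q + 1) → ℝ)))
    (hUdirfin : Udir.Finite) (hUlinfin : Ulin.Finite)
    (hfeas : ∀ p ∈ Udir ∪ Ulin, p.2 = -((Hmat b Z)ᵀ.mulVec p.1) ∧
      (Gmat A P Z)ᵀ.mulVec p.1 = 0 ∧ 0 ≤ p.1)
    (hbasis1 : LinearIndependent ℝ ((↑) : (Prod.snd '' Ulin) → (Fin (q + 1) → ℝ)))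
    (hbasis2 : (Submodule.span ℝ (Prod.snd '' Ulin) : Set (Fin (q + 1) → ℝ)) = Kstar ∩ -Kstar)
    (hext1 : ∀ p ∈ Udir, IsExtremeDir (Kstar ∩ orthSet (Kstar ∩ -Kstar)) p.2)
    (hext2 : ∀ w, IsExtremeDir (Kstar ∩ orthSet (Kstar ∩ -Kstar)) w →
      ∃! w', w' ∈ Prod.snd '' Udir ∧ ∃ t : ℝ, 0 < t ∧ w' = t • w)
    -- `L_𝒟` with the exclusion condition violated
    (LD : Set (Fin q → ℝ))
    (hLD : LD = (Submodule.span ℝ ((fun p => projq (MinvMap cbar p.2)) '' Ulin) :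
      Set (Fin q → ℝ)))
    (hLDR : LD ∩ RstarSet q hq ≠ {0}) :
    -- no maximizer for (VLP*) exists:
    (¬ ∃ t ∈ T, Dmap b t ∉ Dmap b '' T - (RstarSet q hq \ {0})) ∧
    (¬ ∃ t ∈ recCone T \ {0}, Dmap b t ∉ Dmap b '' recCone T - (RstarSet q hq \ {0})) := by
  -- Step 1: extract a nonzero `d ∈ LD ∩ R*`.
  have h0LD : (0 : Fin q → ℝ) ∈ LD ∩ RstarSet q hq := by
    constructor
    · rw [hLD]; exact (Submodule.span ℝ _).zero_mem
    · exact ⟨fun i _ => rfl, le_refl _⟩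
  obtain ⟨d, hdmem, hd0⟩ : ∃ d ∈ LD ∩ RstarSet q hq, d ≠ 0 := by
    by_contra h
    push_neg at h
    exact hLDR (Set.eq_singleton_iff_unique_mem.mpr ⟨h0LD, h⟩)
  obtain ⟨hdLD, hdzero, hdlast⟩ : d ∈ LD ∧ (∀ i : Fin q, (i : ℕ) < q - 1 → d i = 0) ∧
      0 ≤ d (lastIdx q hq) := ⟨hdmem.1, hdmem.2.1, hdmem.2.2⟩
  -- Step 2: find `w0` in the lineality space of `K*` mapping to `d`.
  have hdmap : d ∈ Submodule.map (Lmap q cbar) (Submodule.span ℝ (Prod.snd '' Ulin)) := by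
    rw [← Submodule.span_image]
    have him : Lmap q cbar '' (Prod.snd '' Ulin)
        = (fun p => projq (MinvMap cbar p.2)) '' Ulin := by
      rw [Set.image_image]; rfl
    rw [him]
    rw [hLD] at hdLD
    exact hdLD
  obtain ⟨w0, hw0span, hw0d⟩ := Submodule.mem_map.mp hdmap
  have hw0K : w0 ∈ Kstar ∩ -Kstar := by
    rw [← hbasis2]
    exact hw0span
  obtain ⟨u, hu0, huw, huG⟩ := hKstar ▸ hw0K.1
  obtain ⟨u', hu'0, hu'w, hu'G⟩ := hKstar ▸ (Set.mem_neg.mp hw0K.2)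
  set u1 : Fin m → ℝ := fun i => u ⟨i, by omega⟩ with hu1def
  set u2 : Fin r → ℝ := fun k => u ⟨m + k, by omega⟩ with hu2def
  set u2' : Fin r → ℝ := fun k => u' ⟨m + k, by omega⟩ with hu2'def
  -- componentwise descriptions of `w0`
  have hcomp : ∀ j : Fin q, w0 j.castSucc = -(Z.mulVec u2) j := by
    intro j
    rw [huw, Pi.neg_apply, Ht_lt b Z u j.castSucc (by simpa using j.isLt)]
    exact rfl
  have hcomp' : ∀ j : Fin q, (Z.mulVec u2') j = -(Z.mulVec u2) j := by
    intro j
    have h := congrFun hu'w j.castSucc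
    rw [Pi.neg_apply, Pi.neg_apply, Ht_lt b Z u' j.castSucc (by simpa using j.isLt)] at h
    exact (neg_inj.mp h).symm.trans (hcomp j)
  have hlastw : w0 (Fin.last q) = b ⬝ᵥ u1 - u ⟨m + r, by omega⟩ := by
    rw [huw, Pi.neg_apply, Ht_last b Z u (Fin.last q) rfl]
    ring
  have hGA : Aᵀ.mulVec u1 = Pᵀ.mulVec (Z.mulVec u2) := by
    funext j
    have h := congrFun huG j
    rw [Gt_eq A P Z u j] at h
    exact sub_eq_zero.mp h
  -- Step 3: properties of d expressed via u
  have hdi : ∀ i : Fin q, (i : ℕ) < q - 1 → Z.mulVec u2 i = 0 := by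
    intro i hi
    have h := congrFun hw0d i
    have hL : Lmap q cbar w0 i = -(w0 i.castSucc) := by
      show projq (MinvMap cbar w0) i = _
      simp only [projq, MinvMap]
      rw [if_pos (show ((i.castSucc : Fin (q+1)) : ℕ) < q - 1 by simpa using hi)]
    rw [hL, hcomp i] at h
    have := hdzero i hi
    rw [this] at h
    linarith [h]
  have hdlastval : d (lastIdx q hq) = b ⬝ᵥ u1 - u ⟨m + r, by omega⟩ := by
    have h := congrFun hw0d (lastIdx q hq)
    have hL : Lmap q cbar w0 (lastIdx q hq) = w0 (Fin.last q) := by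
      show projq (MinvMap cbar w0) (lastIdx q hq) = _
      simp only [projq, MinvMap]
      rw [if_neg (by simp [lastIdx]), if_pos (by simp [lastIdx])]
    rw [hL, hlastw] at h
    linarith [h]
  have hbpos : 0 < b ⬝ᵥ u1 := by
    have hne : d (lastIdx q hq) ≠ 0 := by
      intro h
      apply hd0
      funext i
      show d i = 0
      by_cases hi : (i : ℕ) < q - 1
      · exact hdzero i hi
      · have : i = lastIdx q hq := by
          ext; simp only [lastIdx]; omega
        rw [this]; exact h
    have hpos : 0 < d (lastIdx q hq) := lt_of_le_of_ne hdlast (Ne.symm hne)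
    have hu3 : 0 ≤ u ⟨m + r, by omega⟩ := hu0 _
    linarith [hdlastval]
  -- Step 4: `cbar ⬝ᵥ Z u2 = 0`
  have hCmem : 0 ≤ Zᵀ.mulVec cbar := by
    have := intrinsicInterior_subset hcbar
    rw [hC] at this
    exact this
  have hnn : ∀ v : Fin r → ℝ, 0 ≤ v → 0 ≤ cbar ⬝ᵥ Z.mulVec v := by
    intro v hv
    rw [Matrix.dotProduct_mulVec, ← Matrix.mulVec_transpose]
    exact Finset.sum_nonneg fun i _ => mul_nonneg (hCmem i) (hv i)
  have hs0 : cbar ⬝ᵥ Z.mulVec u2 = 0 := by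
    have h1 := hnn u2 (fun k => hu0 _)
    have h2 := hnn u2' (fun k => hu'0 _)
    have hZneg : Z.mulVec u2' = -(Z.mulVec u2) := funext hcomp'
    rw [hZneg, dotProduct_neg] at h2
    linarith
  -- Step 5: the improving direction
  set e : (Fin m → ℝ) × (Fin q → ℝ) := (u1, Z.mulVec u2) with hedef
  have hrec : ∀ x ∈ T, ∀ τ : ℝ, 0 ≤ τ → x + τ • e ∈ T := by
    intro x hx τ hτ
    rw [hT] at hx ⊢
    obtain ⟨v, hv0, hw, hA, hc1, hx0⟩ := hx
    refine ⟨v + τ • u2, ?_, ?_, ?_, ?_, ?_⟩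
    · intro k
      exact add_nonneg (hv0 k) (mul_nonneg hτ (hu0 _))
    · show x.2 + τ • Z.mulVec u2 = Z.mulVec (v + τ • u2)
      rw [Matrix.mulVec_add, Matrix.mulVec_smul, hw]
    · show Aᵀ.mulVec (x.1 + τ • u1) = Pᵀ.mulVec (x.2 + τ • Z.mulVec u2)
      rw [Matrix.mulVec_add, Matrix.mulVec_add, Matrix.mulVec_smul, Matrix.mulVec_smul,
        hA, hGA]
    · show cbar ⬝ᵥ (x.2 + τ • Z.mulVec u2) = 1
      rw [dotProduct_add, dotProduct_smul, hs0, hc1]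
      simp
    · intro i
      exact add_nonneg (hx0 i) (mul_nonneg hτ (hu0 _))
  -- the objective increment
  set dd : Fin q → ℝ := Dmap b e with hdddef
  have hddR : dd ∈ RstarSet q hq \ {0} := by
    constructor
    · constructor
      · intro i hi
        show Dmap b e i = 0
        rw [Dmap, if_pos hi]
        exact hdi i hi
      · show 0 ≤ Dmap b e (lastIdx q hq)
        rw [Dmap, if_neg (by simp [lastIdx])]
        exact le_of_lt hbpos
    · intro h
      have h2 : Dmap b e (lastIdx q hq) = 0 :=
        congrFun (Set.mem_singleton_iff.mp h) (lastIdx q hq)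
      rw [Dmap, if_neg (by simp [lastIdx])] at h2
      exact absurd h2 (ne_of_gt hbpos)
  have hDshift : ∀ t : (Fin m → ℝ) × (Fin q → ℝ), Dmap b (t + e) - dd = Dmap b t := by
    intro t
    funext i
    show Dmap b (t + e) i - Dmap b e i = Dmap b t i
    simp only [Dmap]
    by_cases hi : (i : ℕ) < q - 1
    · rw [if_pos hi, if_pos hi, if_pos hi]
      show t.2 i + e.2 i - e.2 i = t.2 i
      ring
    · rw [if_neg hi, if_neg hi, if_neg hi]
      show b ⬝ᵥ (t.1 + e.1) - b ⬝ᵥ e.1 = b ⬝ᵥ t.1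
      rw [dotProduct_add]
      ring
  constructor
  · rintro ⟨t, ht, hmax⟩
    apply hmax
    have hte : t + e ∈ T := by
      have := hrec t ht 1 zero_le_one
      rwa [one_smul] at this
    exact Set.mem_sub.mpr ⟨Dmap b (t + e), Set.mem_image_of_mem _ hte, dd, hddR, hDshift t⟩
  · rintro ⟨t, ht, hmax⟩
    apply hmax
    have hte : t + e ∈ recCone T := by
      intro x hx τ hτ
      have hx' : x + τ • t ∈ T := ht.1 x hx τ hτ
      have h2 := hrec (x + τ • t) hx' τ hτ
      have h3 : x + τ • t + τ • e = x + τ • (t + e) := by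
        rw [smul_add]; abel
      rwa [h3] at h2
    exact Set.mem_sub.mpr ⟨Dmap b (t + e), Set.mem_image_of_mem _ hte, dd, hddR, hDshift t⟩
end
end

section
/- Let K ⊆ ℝ^p be a polyhedral convex cone with lineality space L(K) := K ∩ (−K), and let K̂ := K ∩ L(K)^⊥. Then the map Δ defined by Δ(F̂) := F̂ + L(K) is an inclusion-invariant one-to-one map between the set of all faces of K̂ and the set of all faces of K, with inverse Δ⁻¹(F) = F ∩ L(K)^⊥. -/
open Matrix Set Pointwise

noncomputable section

/-!
The lineality space `L = K ∩ -K` of a convex cone is a subspace with `K + L ⊆ K`, and the midpoint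
of `x + l` and `x - l` shows that every face of `K` is invariant under `L` as well. Splitting
`ℝ^p = L ⊕ L^⊥`, the projection `π` onto `L^⊥` along `L` is linear and maps `K` onto `K̂`, and
`F̂ + L = K ∩ π⁻¹(F̂)` for `F̂ ⊆ K̂`; so faces pull back to faces, and `F ↦ F ∩ L^⊥`,
`F̂ ↦ F̂ + L` are mutually inverse.
-/

section Faces

variable {E : Type*} [AddCommGroup E] [Module ℝ E] {K F : Set E} {L V : Submodule ℝ E}

lemma isFaceOf_empty_iff : IsFaceOf F ∅ ↔ F = ∅ :=
  ⟨fun hF => subset_empty_iff.mp hF.2.1, by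
    rintro rfl
    exact ⟨convex_empty, subset_rfl, fun y hy => absurd hy (notMem_empty y)⟩⟩

lemma IsFaceOf.inter_convex {C : Set E} (hF : IsFaceOf F K) (hC : Convex ℝ C) :
    IsFaceOf (F ∩ C) (K ∩ C) := by
  refine ⟨hF.1.inter hC, inter_subset_inter_left C hF.2.1, ?_⟩
  intro y hy z hz l hl0 hl1 hmem
  obtain ⟨hyF, hzF⟩ := hF.2.2 y hy.1 z hz.1 l hl0 hl1 hmem.1
  exact ⟨⟨hyF, hy.2⟩, ⟨hzF, hz.2⟩⟩

lemma exists_pointedCone_coe_eq (hK : K = coneOf K) (hne : K.Nonempty) :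
    ∃ C : PointedCone ℝ E, (C : Set E) = K := by
  have hsmul : ∀ c : ℝ, 0 ≤ c → ∀ x ∈ K, c • x ∈ K := fun c hc x hx => by
    rw [hK]; exact ⟨c, hc, x, subset_convexHull ℝ K hx, rfl⟩
  have hconv : Convex ℝ K := by
    intro x hx y hy a b ha hb hab
    rw [hK]; exact ⟨1, zero_le_one, _, convex_convexHull ℝ K
      (subset_convexHull ℝ K hx) (subset_convexHull ℝ K hy) ha hb hab, (one_smul ℝ _).symm⟩
  obtain ⟨x₀, hx₀⟩ := hne
  refine ⟨{ carrier := K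
            add_mem' := fun {x y} hx hy => ?_
            zero_mem' := ?_
            smul_mem' := fun c x hx => hsmul c c.2 x hx }, rfl⟩
  · have hmid := hconv hx hy (by norm_num : (0 : ℝ) ≤ 1 / 2) (by norm_num : (0 : ℝ) ≤ 1 / 2)
      (by norm_num)
    convert hsmul 2 zero_le_two _ hmid using 1
    module
  · simpa using hsmul 0 le_rfl x₀ hx₀

lemma IsFaceOf.add_mem_of_mem_submodule (hKL : K + (L : Set E) ⊆ K) (hF : IsFaceOf F K)
    {x l : E} (hx : x ∈ F) (hl : l ∈ L) : x + l ∈ F := by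
  have hxK := hF.2.1 hx
  have hmid : (1 / 2 : ℝ) • (x + l) + (1 - 1 / 2 : ℝ) • (x + -l) = x := by module
  exact (hF.2.2 _ (hKL (add_mem_add hxK hl)) _ (hKL (add_mem_add hxK (L.neg_mem hl)))
    (1 / 2) (by norm_num) (by norm_num) (by rw [hmid]; exact hx)).1

lemma IsFaceOf.inter_add_eq (hLV : Codisjoint L V) (hKL : K + (L : Set E) ⊆ K)
    (hF : IsFaceOf F K) :
    F ∩ V + (L : Set E) = F := by
  refine Subset.antisymm ?_ fun x hx => ?_
  · rintro _ ⟨f, hf, l, hl, rfl⟩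
    exact hF.add_mem_of_mem_submodule hKL hf.1 hl
  · obtain ⟨a, ha, b, hb, rfl⟩ :=
      Submodule.mem_sup.mp (hLV.eq_top ▸ Submodule.mem_top : x ∈ L ⊔ V)
    have hbF : b ∈ F := by
      simpa using hF.add_mem_of_mem_submodule hKL hx (L.neg_mem ha)
    exact ⟨b, ⟨hbF, hb⟩, a, ha, add_comm b a⟩

lemma add_submodule_inter_eq {S : Set E} (hLV : Disjoint L V) (hS : S ⊆ V) :
    (S + (L : Set E)) ∩ V = S := by
  refine Subset.antisymm ?_ fun s hs => ⟨⟨s, hs, 0, L.zero_mem, add_zero s⟩, hS hs⟩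
  rintro _ ⟨⟨s, hs, l, hl, rfl⟩, hV⟩
  have hlV : l ∈ V := by simpa using V.sub_mem hV (hS hs)
  simpa [Submodule.disjoint_def.mp hLV l hl hlV] using hs

lemma mem_add_submodule_iff (hLV : IsCompl L V) (hKL : K + (L : Set E) ⊆ K) {S : Set E}
    (hS : S ⊆ K ∩ V) {x : E} :
    x ∈ S + (L : Set E) ↔ x ∈ K ∧ V.projection L hLV.symm x ∈ S := by
  constructor
  · rintro ⟨s, hs, l, hl, rfl⟩
    refine ⟨hKL (add_mem_add (hS hs).1 hl), ?_⟩
    rwa [map_add, Submodule.projection_apply_of_mem_left _ (hS hs).2,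
      Submodule.projection_apply_of_mem_right _ hl, add_zero]
  · rintro ⟨-, hx⟩
    exact ⟨_, hx, _, Submodule.sub_projection_mem _ x, add_sub_cancel _ _⟩

lemma projection_mem_inter (hLV : IsCompl L V) (hKL : K + (L : Set E) ⊆ K) {x : E}
    (hx : x ∈ K) :
    V.projection L hLV.symm x ∈ K ∩ V := by
  refine ⟨?_, Submodule.projection_apply_mem _ x⟩
  simpa using hKL (add_mem_add hx (L.neg_mem (Submodule.sub_projection_mem hLV.symm x)))

lemma IsFaceOf.add_submodule (hLV : IsCompl L V) (hKL : K + (L : Set E) ⊆ K)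
    (hF : IsFaceOf F (K ∩ V)) : IsFaceOf (F + (L : Set E)) K := by
  refine ⟨hF.1.add L.convex, ?_, ?_⟩
  · exact fun x hx => ((mem_add_submodule_iff hLV hKL hF.2.1).mp hx).1
  intro y hy z hz t ht0 ht1 hmem
  set π := V.projection L hLV.symm
  have hπ : t • π y + (1 - t) • π z ∈ F := by
    simpa using ((mem_add_submodule_iff hLV hKL hF.2.1).mp hmem).2
  obtain ⟨hyF, hzF⟩ := hF.2.2 _ (projection_mem_inter hLV hKL hy) _
    (projection_mem_inter hLV hKL hz) t ht0 ht1 hπ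
  exact ⟨(mem_add_submodule_iff hLV hKL hF.2.1).mpr ⟨hy, hyF⟩,
    (mem_add_submodule_iff hLV hKL hF.2.1).mpr ⟨hz, hzF⟩⟩

end Faces

lemma isCompl_orthogonal_dotProductBilin {𝕜 ι : Type*} [Field 𝕜] [LinearOrder 𝕜]
    [IsStrictOrderedRing 𝕜] [Fintype ι] (W : Submodule 𝕜 (ι → 𝕜)) :
    IsCompl W (LinearMap.BilinForm.orthogonal (dotProductBilin 𝕜 𝕜) W) := by
  refine (LinearMap.BilinForm.isCompl_orthogonal_iff_disjoint
    fun x y h => by simpa only [dotProductBilin_apply_apply, dotProduct_comm] using h).mpr ?_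
  exact Submodule.disjoint_def.mpr fun x hx hxo =>
    dotProduct_self_eq_zero.mp (LinearMap.BilinForm.mem_orthogonal_iff.mp hxo x hx)

lemma coe_orthogonal_dotProductBilin {d : ℕ} (W : Submodule ℝ (Fin d → ℝ)) :
    (LinearMap.BilinForm.orthogonal (dotProductBilin ℝ ℝ) W : Set (Fin d → ℝ)) = orthSet W := by
  ext y
  simp [orthSet, LinearMap.BilinForm.mem_orthogonal_iff, dotProduct_comm]

theorem stmt13_general (p : ℕ) (K : Set (Fin p → ℝ)) (hKcone : K = coneOf K)
    (L Khat : Set (Fin p → ℝ)) (hL : L = K ∩ -K) (hKhat : Khat = K ∩ orthSet L) :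
    (∀ Fh, IsFaceOf Fh Khat → IsFaceOf (Fh + L) K) ∧
    (∀ F, IsFaceOf F K → IsFaceOf (F ∩ orthSet L) Khat ∧ (F ∩ orthSet L) + L = F) ∧
    (∀ Fh, IsFaceOf Fh Khat → (Fh + L) ∩ orthSet L = Fh) ∧
    (∀ Fh1 Fh2, IsFaceOf Fh1 Khat → IsFaceOf Fh2 Khat → (Fh1 ⊆ Fh2 ↔ Fh1 + L ⊆ Fh2 + L)) := by
  rcases K.eq_empty_or_nonempty with rfl | hne
  · simp [hKhat, hL, isFaceOf_empty_iff]
  obtain ⟨C, rfl⟩ := exists_pointedCone_coe_eq hKcone hne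
  set V := LinearMap.BilinForm.orthogonal (dotProductBilin ℝ ℝ) C.lineal
  have hLV : IsCompl C.lineal V := isCompl_orthogonal_dotProductBilin _
  have hKL : (C : Set (Fin p → ℝ)) + C.lineal ⊆ C :=
    Set.add_subset_iff.mpr fun x hx l hl => C.add_mem hx (PointedCone.lineal_le C hl)
  obtain rfl : L = C.lineal := by ext; simp [hL]
  obtain rfl : Khat = (C : Set (Fin p → ℝ)) ∩ V := by rw [hKhat, coe_orthogonal_dotProductBilin]
  rw [← coe_orthogonal_dotProductBilin]
  refine ⟨fun Fh hFh => hFh.add_submodule hLV hKL,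
    fun F hF => ⟨hF.inter_convex V.convex, hF.inter_add_eq hLV.codisjoint hKL⟩,
    fun Fh hFh => add_submodule_inter_eq hLV.disjoint (hFh.2.1.trans inter_subset_right),
    fun F₁ F₂ hF₁ hF₂ => ⟨fun h => add_subset_add_right h, fun h => ?_⟩⟩
  rw [← add_submodule_inter_eq hLV.disjoint (hF₁.2.1.trans inter_subset_right),
    ← add_submodule_inter_eq hLV.disjoint (hF₂.2.1.trans inter_subset_right)]
  exact inter_subset_inter_left _ h

/-- `Δ(F̂) = F̂ + L(K)` is an inclusion-invariant bijection between the faces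
of `K̂ = K ∩ L(K)^⊥` and the faces of `K`, with inverse `F ↦ F ∩ L(K)^⊥`. -/
theorem stmt13 (p : ℕ) (K : Set (Fin p → ℝ)) (hKpoly : IsPolyhedron K) (hKcone : K = coneOf K)
    (L Khat : Set (Fin p → ℝ)) (hL : L = K ∩ -K) (hKhat : Khat = K ∩ orthSet L) :
    (∀ Fh, IsFaceOf Fh Khat → IsFaceOf (Fh + L) K) ∧
    (∀ F, IsFaceOf F K → IsFaceOf (F ∩ orthSet L) Khat ∧ (F ∩ orthSet L) + L = F) ∧
    (∀ Fh, IsFaceOf Fh Khat → (Fh + L) ∩ orthSet L = Fh) ∧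
    (∀ Fh1 Fh2, IsFaceOf Fh1 Khat → IsFaceOf Fh2 Khat → (Fh1 ⊆ Fh2 ↔ Fh1 + L ⊆ Fh2 + L)) :=
  stmt13_general p K hKcone L Khat hL hKhat
end
end

section
/- Let F be a nonempty face of K. The following are equivalent: (i) F is an (R×{0})-minimal face of K, i.e., every y ∈ F satisfies y − εc ∉ K for all ε > 0 (equivalently, y ∉ K + cone{c}∖{0}); (ii) there exists w ∈ Γ(F) such that cᵀw < 0. -/
/-!
Only (i) ⇒ (ii) needs an argument. Pick `y₀ ∈ F` in relative-interior position (the centroid of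
an affine basis of `F`). As `y₀ - εc ∉ K` for all `ε > 0`, the system `Gx + λ H y₀ ≥ H c` has no
solution, so Farkas' lemma gives `u ≥ 0` with `uᵀG = 0`, `uᵀH y₀ = 0` and `uᵀH c > 0`. Then
`w = -Hᵀu` lies in `K°`, vanishes at `y₀` and therefore on all of `F`, and `cᵀw < 0`.
Farkas' lemma is proved by separating a point from a finitely generated cone, which is closed by
the conic Carathéodory theorem.
-/

open Matrix Set Pointwise

noncomputable section

section ConicCaratheodory

variable {ι E : Type*} [Fintype ι] [AddCommGroup E] [Module ℝ E] [DecidableEq ι]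

lemma exists_erase_nonneg_sum_smul_eq_of_not_linearIndepOn {v : ι → E} {s : Finset ι} {u : ι → ℝ}
    (hu : 0 ≤ u) (hus : ∀ i ∉ s, u i = 0) (hv : ¬ LinearIndepOn ℝ v (s : Set ι)) :
    ∃ i₀ ∈ s, ∃ u' : ι → ℝ, 0 ≤ u' ∧ (∀ i ∉ s.erase i₀, u' i = 0) ∧
      ∑ i, u' i • v i = ∑ i, u i • v i := by
  obtain ⟨c, hc, j, hjs, hcj⟩ : ∃ c : ι → ℝ, ∑ i ∈ s, c i • v i = 0 ∧ ∃ j ∈ s, 0 < c j := by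
    obtain ⟨g, hg, j, hjs, hgj⟩ := not_linearIndepOn_finset_iff.mp hv
    rcases hgj.lt_or_gt with hneg | hpos
    · exact ⟨-g, by simp [neg_smul, hg], j, hjs, neg_pos.mpr hneg⟩
    · exact ⟨g, hg, j, hjs, hpos⟩
  -- move along the relation `c` until the first coefficient of `u` hits zero
  obtain ⟨i₀, hi₀, hmin⟩ := Finset.exists_min_image (s.filter (0 < c ·)) (fun i => u i / c i)
    ⟨j, Finset.mem_filter.mpr ⟨hjs, hcj⟩⟩
  obtain ⟨hi₀s, hci₀⟩ := Finset.mem_filter.mp hi₀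
  set t := u i₀ / c i₀
  have ht : 0 ≤ t := div_nonneg (hu i₀) hci₀.le
  refine ⟨i₀, hi₀s, fun i => if i ∈ s then u i - t * c i else 0, fun i => ?_, fun i hi => ?_, ?_⟩
  · by_cases his : i ∈ s
    · rcases lt_or_ge 0 (c i) with hci | hci
      · have := hmin i (Finset.mem_filter.mpr ⟨his, hci⟩)
        rw [le_div_iff₀ hci] at this
        simp [his, this]
      · simpa [his] using (mul_nonpos_of_nonneg_of_nonpos ht hci).trans (hu i)
    · simp [his]
  · by_cases his : i ∈ s
    · obtain rfl : i = i₀ := by simpa [his] using hi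
      simp [his, t, div_mul_cancel₀ _ hci₀.ne']
    · simp [his]
  · have hsum : ∀ w : ι → ℝ, (∀ i ∉ s, w i = 0) → ∑ i, w i • v i = ∑ i ∈ s, w i • v i :=
      fun w hw => (Finset.sum_subset (Finset.subset_univ s) fun i _ hi => by simp [hw i hi]).symm
    rw [hsum _ fun i hi => if_neg hi, hsum u hus,
      Finset.sum_congr rfl fun i hi => by rw [if_pos hi]]
    simp only [sub_smul, Finset.sum_sub_distrib, mul_smul, ← Finset.smul_sum, hc, smul_zero,
      sub_zero]

lemma exists_linearIndepOn_nonneg_sum_smul_eq (v : ι → E) (s : Finset ι) {u : ι → ℝ}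
    (hu : 0 ≤ u) (hus : ∀ i ∉ s, u i = 0) :
    ∃ J : Finset ι, LinearIndepOn ℝ v (J : Set ι) ∧ ∃ u' : ι → ℝ, 0 ≤ u' ∧
      (∀ i ∉ J, u' i = 0) ∧ ∑ i, u' i • v i = ∑ i, u i • v i := by
  induction s using Finset.strongInduction generalizing u with
  | H s ih =>
    by_cases hv : LinearIndepOn ℝ v (s : Set ι)
    · exact ⟨s, hv, u, hu, hus, rfl⟩
    obtain ⟨i₀, hi₀, u', hu', hus', hsum⟩ :=
      exists_erase_nonneg_sum_smul_eq_of_not_linearIndepOn hu hus hv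
    obtain ⟨J, hJ, u'', hu'', hus'', hsum'⟩ := ih _ (Finset.erase_ssubset hi₀) hu' hus'
    exact ⟨J, hJ, u'', hu'', hus'', hsum'.trans hsum⟩

end ConicCaratheodory

section FinitelyGeneratedCone

variable {ι E : Type*} [Fintype ι] [AddCommGroup E] [Module ℝ E] [TopologicalSpace E]
  [IsTopologicalAddGroup E] [ContinuousSMul ℝ E]

theorem isClosed_image_linearCombination_nonneg [T2Space E] (v : ι → E) :
    IsClosed (Fintype.linearCombination ℝ v '' Ici 0) := by
  classical
  let W : Finset ι → Submodule ℝ (ι → ℝ) := fun J => Submodule.pi (↑J)ᶜ fun _ => ⊥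
  have hW : ∀ J u, u ∈ W J ↔ ∀ i ∉ J, u i = 0 := fun J u => by simp [W, Submodule.mem_pi]
  have hunion : Fintype.linearCombination ℝ v '' Ici 0 = ⋃ (J : Finset ι)
      (_ : LinearIndepOn ℝ v (J : Set ι)),
      (Fintype.linearCombination ℝ v ∘ₗ (W J).subtype) '' {w | 0 ≤ (w : ι → ℝ)} := by
    ext x
    simp only [mem_image, mem_iUnion, LinearMap.coe_comp, Function.comp_apply,
      Submodule.coe_subtype, Subtype.exists, hW, mem_Ici, mem_ofPred_eq, exists_prop]
    constructor
    · rintro ⟨u, hu, rfl⟩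
      obtain ⟨J, hJ, u', hu', hJu', hsum⟩ :=
        exists_linearIndepOn_nonneg_sum_smul_eq v Finset.univ hu (by simp)
      exact ⟨J, hJ, u', hJu', hu', by simpa [Fintype.linearCombination_apply] using hsum⟩
    · rintro ⟨J, -, u, -, hu, rfl⟩
      exact ⟨u, hu, rfl⟩
  rw [hunion]
  refine isClosed_iUnion_of_finite fun J => isClosed_iUnion_of_finite fun hJ => ?_
  have hinj : LinearMap.ker (Fintype.linearCombination ℝ v ∘ₗ (W J).subtype) = ⊥ := by
    rw [LinearMap.ker_eq_bot']
    rintro ⟨w, hw⟩ hw0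
    have hwJ := (hW J w).mp hw
    have hsum : ∑ i ∈ J, w i • v i = 0 := by
      rw [← hw0]
      simp only [LinearMap.coe_comp, Function.comp_apply, Submodule.coe_subtype,
        Fintype.linearCombination_apply]
      exact Finset.sum_subset (Finset.subset_univ J) fun i _ hi => by simp [hwJ i hi]
    ext i
    by_cases hi : i ∈ J
    · exact linearIndepOn_finset_iff.mp hJ w hsum i hi
    · exact hwJ i hi
  exact (LinearMap.isClosedEmbedding_of_injective hinj).isClosedMap _
    (isClosed_le continuous_const continuous_subtype_val)

theorem exists_dual_nonneg_of_notMem_image_linearCombination [T2Space E] [LocallyConvexSpace ℝ E]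
    (v : ι → E) {d : E} (hd : d ∉ Fintype.linearCombination ℝ v '' Ici 0) :
    ∃ f : StrongDual ℝ E, (∀ i, 0 ≤ f (v i)) ∧ f d < 0 := by
  let C : ProperCone ℝ E :=
    ⟨(PointedCone.positive ℝ (ι → ℝ)).map (Fintype.linearCombination ℝ v),
      by simpa [PointedCone.coe_map] using isClosed_image_linearCombination_nonneg v⟩
  obtain ⟨f, hf, hfd⟩ := C.hyperplane_separation_point (x₀ := d) (by simpa [C] using hd)
  refine ⟨f, fun i => hf _ ?_, hfd⟩
  classical
  show v i ∈ Fintype.linearCombination ℝ v '' Ici 0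
  exact ⟨Pi.single i 1, Pi.single_nonneg.mpr zero_le_one, by simp⟩

end FinitelyGeneratedCone

theorem Matrix.exists_nonneg_vecMul_eq_zero_of_not_exists_le_mulVec {ι κ : Type*} [Fintype ι]
    [Fintype κ] (M : Matrix ι κ ℝ) (d : ι → ℝ) (h : ¬ ∃ z, d ≤ M *ᵥ z) :
    ∃ u, 0 ≤ u ∧ u ᵥ* M = 0 ∧ 0 < u ⬝ᵥ d := by
  classical
  -- `d ≤ M z` for some `z` iff `d` is a nonnegative combination of `±` the columns of `M`
  -- and of the vectors `-eᵢ`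
  let v : κ ⊕ κ ⊕ ι → ι → ℝ :=
    Sum.elim (fun j => Mᵀ j) (Sum.elim (fun j => -Mᵀ j) fun i => -Pi.single i 1)
  have hv : ∀ a, Fintype.linearCombination ℝ v a =
      M *ᵥ (a ∘ Sum.inl - a ∘ Sum.inr ∘ Sum.inl) - a ∘ Sum.inr ∘ Sum.inr := by
    intro a
    ext i
    simp only [v, Fintype.linearCombination_apply, Finset.sum_apply, Pi.smul_apply, smul_eq_mul,
      Fintype.sum_sum_type, Sum.elim_inl, Sum.elim_inr, transpose_apply, Pi.neg_apply, neg_mul,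
      Finset.sum_neg_distrib, Pi.single_apply, ite_mul, one_mul, zero_mul, Finset.sum_ite_eq,
      Finset.mem_univ, ↓reduceIte, Pi.sub_apply, mulVec, dotProduct, Function.comp_apply, mul_comm,
      mul_sub, Finset.sum_sub_distrib]
    ring
  obtain ⟨f, hfv, hfd⟩ := exists_dual_nonneg_of_notMem_image_linearCombination v (d := d) <| by
    rintro ⟨a, ha, had⟩
    refine h ⟨a ∘ Sum.inl - a ∘ Sum.inr ∘ Sum.inl, ?_⟩
    rw [← sub_nonneg, ← had, hv, sub_sub_cancel]
    exact fun i => ha _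
  have hf : ∀ x, f x = (fun i => f (Pi.single i 1)) ⬝ᵥ x := fun x => by
    conv_lhs => rw [← Finset.univ_sum_single x]
    simp only [map_sum, dotProduct]
    refine Finset.sum_congr rfl fun i _ => ?_
    have hx : Pi.single i (x i) = x i • Pi.single i (1 : ℝ) := by
      rw [← Pi.single_smul', smul_eq_mul, mul_one]
    rw [hx, map_smul, smul_eq_mul, mul_comm]
  set y := fun i => f (Pi.single i 1)
  have hcol : ∀ j, f (Mᵀ j) = (y ᵥ* M) j := fun j => hf _
  refine ⟨-y, fun i => ?_, ?_, ?_⟩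
  · simpa [v, y] using hfv (.inr (.inr i))
  · ext j
    have h₁ := hfv (.inl j)
    have h₂ := hfv (.inr (.inl j))
    simp only [v, Sum.elim_inl, Sum.elim_inr, map_neg, hcol] at h₁ h₂
    simp [neg_vecMul, le_antisymm (neg_nonneg.mp h₂) h₁]
  · rw [neg_dotProduct, ← hf]
    exact neg_pos.mpr hfd

theorem Convex.exists_mem_forall_dual_nonpos_eq_zero {E : Type*} [AddCommGroup E] [Module ℝ E]
    [FiniteDimensional ℝ E] {F : Set E} (hF : Convex ℝ F) (hne : F.Nonempty) :
    ∃ y₀ ∈ F, ∀ f : Module.Dual ℝ E, (∀ z ∈ F, f z ≤ 0) → f y₀ = 0 → ∀ z ∈ F, f z = 0 := by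
  -- the centroid of finitely many points of `F` spanning its affine hull
  obtain ⟨t, htF, hspan, hind⟩ := exists_affineIndependent ℝ E F
  have htfin := finite_set_of_fin_dim_affineIndependent ℝ hind
  set s := htfin.toFinset
  have hs : s.Nonempty := by
    rw [htfin.toFinset_nonempty, ← affineSpan_nonempty (k := ℝ), hspan, affineSpan_nonempty]
    exact hne
  have hcard : (0 : ℝ) < s.card := by exact_mod_cast hs.card_pos
  refine ⟨∑ z ∈ s, (s.card : ℝ)⁻¹ • z, hF.sum_mem (fun _ _ => by positivity)
    (by simp [hcard.ne']) fun z hz => htF (htfin.mem_toFinset.mp hz), fun f hfF hf0 => ?_⟩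
  have hts : ∀ z ∈ s, f z = 0 := by
    rw [map_sum] at hf0
    simp only [map_smul, smul_eq_mul, ← Finset.mul_sum, mul_eq_zero, inv_eq_zero,
      hcard.ne', false_or] at hf0
    exact (Finset.sum_eq_zero_iff_of_nonpos fun z hz =>
      hfF z (htF (htfin.mem_toFinset.mp hz))).mp hf0
  have hker : affineSpan ℝ F ≤ (LinearMap.ker f).toAffineSubspace := by
    rw [← hspan, affineSpan_le]
    exact fun z hz => hts z (htfin.mem_toFinset.mpr hz)
  exact fun z hz => hker (subset_affineSpan ℝ F hz)

section ProjectedPolyhedralCone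

variable {ι κ μ : Type*} [Fintype ι] [Fintype κ] [Fintype μ]

def projPolyCone (G : Matrix ι κ ℝ) (H : Matrix ι μ ℝ) : Set (μ → ℝ) :=
  {y | ∃ x, 0 ≤ G *ᵥ x + H *ᵥ y}

variable {G : Matrix ι κ ℝ} {H : Matrix ι μ ℝ}

lemma dotProduct_mulVec_nonneg_of_mem_projPolyCone {u : ι → ℝ} (hu : 0 ≤ u) (huG : u ᵥ* G = 0)
    {y : μ → ℝ} (hy : y ∈ projPolyCone G H) : 0 ≤ u ⬝ᵥ (H *ᵥ y) := by
  obtain ⟨x, hx⟩ := hy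
  simpa [dotProduct_add, dotProduct_mulVec, huG] using dotProduct_nonneg_of_nonneg hu hx

lemma neg_vecMul_dotProduct_nonpos_of_mem_projPolyCone {u : ι → ℝ} (hu : 0 ≤ u)
    (huG : u ᵥ* G = 0) {y : μ → ℝ} (hy : y ∈ projPolyCone G H) : -(u ᵥ* H) ⬝ᵥ y ≤ 0 := by
  rw [neg_dotProduct, ← dotProduct_mulVec, neg_nonpos]
  exact dotProduct_mulVec_nonneg_of_mem_projPolyCone hu huG hy

theorem exists_nonneg_vecMul_eq_zero_of_forall_sub_smul_notMem {y₀ c : μ → ℝ}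
    (hy₀ : y₀ ∈ projPolyCone G H) (h : ∀ ε : ℝ, 0 < ε → y₀ - ε • c ∉ projPolyCone G H) :
    ∃ u, 0 ≤ u ∧ u ᵥ* G = 0 ∧ u ⬝ᵥ (H *ᵥ y₀) = 0 ∧ 0 < u ⬝ᵥ (H *ᵥ c) := by
  obtain ⟨x₀, hx₀⟩ := hy₀
  obtain ⟨u, hu, huM, huc⟩ :=
    (fromCols G (replicateCol Unit (H *ᵥ y₀))).exists_nonneg_vecMul_eq_zero_of_not_exists_le_mulVec
      (H *ᵥ c) <| by
      rintro ⟨z, hz⟩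
      set x := z ∘ Sum.inl
      set l := z (.inr ())
      have hz' : H *ᵥ c ≤ G *ᵥ x + l • H *ᵥ y₀ := fun i => by
        simpa [x, l, mulVec, dotProduct, replicateCol, mul_comm] using hz i
      -- add `t` times the feasible point `(x₀, 1)` to make the last coordinate positive
      set t := |l| + 1
      have hpos : 0 < l + t := by linarith [neg_abs_le l]
      refine h (l + t)⁻¹ (inv_pos.mpr hpos) ⟨(l + t)⁻¹ • (x + t • x₀), ?_⟩
      have key : G *ᵥ ((l + t)⁻¹ • (x + t • x₀)) + H *ᵥ (y₀ - (l + t)⁻¹ • c) =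
          (l + t)⁻¹ • ((G *ᵥ x + l • H *ᵥ y₀ - H *ᵥ c) + t • (G *ᵥ x₀ + H *ᵥ y₀)) := by
        ext i
        simp only [mulVec_smul, mulVec_add, mulVec_sub, Pi.add_apply, Pi.sub_apply, Pi.smul_apply,
          smul_eq_mul]
        field_simp
        ring
      rw [key]
      exact smul_nonneg (inv_nonneg.mpr hpos.le) (add_nonneg (sub_nonneg.mpr hz')
        (smul_nonneg (by positivity) hx₀))
  rw [vecMul_fromCols, mulVec_replicateCol_eq_const] at huM
  exact ⟨u, hu, funext fun j => congrFun huM (.inl j), congrFun huM (.inr ()), huc⟩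

theorem exists_dotProduct_neg_of_forall_sub_smul_notMem {F : Set (μ → ℝ)} (hF : Convex ℝ F)
    (hFK : F ⊆ projPolyCone G H) (hFne : F.Nonempty) {c : μ → ℝ}
    (h : ∀ y ∈ F, ∀ ε : ℝ, 0 < ε → y - ε • c ∉ projPolyCone G H) :
    ∃ w, (∀ y ∈ projPolyCone G H, w ⬝ᵥ y ≤ 0) ∧ (∀ y ∈ F, w ⬝ᵥ y = 0) ∧ c ⬝ᵥ w < 0 := by
  obtain ⟨y₀, hy₀F, hy₀⟩ := hF.exists_mem_forall_dual_nonpos_eq_zero hFne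
  obtain ⟨u, hu, huG, huy₀, huc⟩ :=
    exists_nonneg_vecMul_eq_zero_of_forall_sub_smul_notMem (hFK hy₀F) (h y₀ hy₀F)
  have hpolar : ∀ y ∈ projPolyCone G H, -(u ᵥ* H) ⬝ᵥ y ≤ 0 :=
    fun y hy => neg_vecMul_dotProduct_nonpos_of_mem_projPolyCone hu huG hy
  refine ⟨-(u ᵥ* H), hpolar, ?_, ?_⟩
  · have := hy₀ (dotProductBilin ℝ ℝ (-(u ᵥ* H))) (fun z hz => hpolar z (hFK hz))
      (by simp [← dotProduct_mulVec, huy₀])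
    simpa using this
  · rw [dotProduct_comm, neg_dotProduct, ← dotProduct_mulVec, neg_neg_iff_pos]
    exact huc

end ProjectedPolyhedralCone

theorem sub_smul_notMem_of_dotProduct_neg {μ : Type*} [Fintype μ] {K : Set (μ → ℝ)}
    {w y c : μ → ℝ} (hwK : ∀ z ∈ K, w ⬝ᵥ z ≤ 0) (hwy : w ⬝ᵥ y = 0) (hcw : c ⬝ᵥ w < 0) {ε : ℝ}
    (hε : 0 < ε) : y - ε • c ∉ K := fun hK => by
  have := hwK _ hK
  rw [dotProduct_sub, dotProduct_smul, hwy, dotProduct_comm, smul_eq_mul, zero_sub,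
    neg_nonpos] at this
  exact (mul_neg_of_pos_of_neg hε hcw).not_ge this

theorem stmt14_general
    (m n q r : ℕ)
    (A : Matrix (Fin m) (Fin n) ℝ) (P : Matrix (Fin q) (Fin n) ℝ)
    (Z : Matrix (Fin q) (Fin r) ℝ) (b : Fin m → ℝ)
    (c : Fin (q + 1) → ℝ)
    (K : Set (Fin (q + 1) → ℝ))
    (hK : K = {y | ∃ x : Fin n → ℝ, 0 ≤ (Gmat A P Z).mulVec x + (Hmat b Z).mulVec y})
    (F : Set (Fin (q + 1) → ℝ)) (hF : IsFaceOf F K) (hFne : F.Nonempty) :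
    (∀ y ∈ F, ∀ ε : ℝ, 0 < ε → y - ε • c ∉ K) ↔
      ∃ w ∈ ⋂ y ∈ F, {w ∈ polarCone K | w ⬝ᵥ y = 0}, c ⬝ᵥ w < 0 := by
  change K = projPolyCone (Gmat A P Z) (Hmat b Z) at hK
  subst hK
  constructor
  · intro h
    obtain ⟨w, hwK, hwF, hcw⟩ := exists_dotProduct_neg_of_forall_sub_smul_notMem hF.1 hF.2.1 hFne h
    exact ⟨w, mem_iInter₂.mpr fun y hy => ⟨hwK, hwF y hy⟩, hcw⟩
  · rintro ⟨w, hw, hcw⟩ y hy ε hε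
    obtain ⟨hwK, hwy⟩ := mem_iInter₂.mp hw y hy
    exact sub_smul_notMem_of_dotProduct_neg hwK hwy hcw hε

/-- A nonempty face `F` of `K` is `(R×{0})`-minimal iff some `w ∈ Γ(F)`
satisfies `cᵀw < 0`. -/
theorem stmt14
    (m n q r : ℕ) (hm : 0 < m) (hn : 0 < n) (hq : 0 < q) (hr : 0 < r)
    (A : Matrix (Fin m) (Fin n) ℝ) (P : Matrix (Fin q) (Fin n) ℝ)
    (Z : Matrix (Fin q) (Fin r) ℝ) (b : Fin m → ℝ)
    (C : Set (Fin q → ℝ)) (hC : C = {y | 0 ≤ Zᵀ.mulVec y})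
    (hCpointed : C ∩ -C = {0}) (hCnontriv : C ≠ {0})
    (S : Set (Fin n → ℝ)) (hS : S = {x | b ≤ A.mulVec x}) (hSne : S.Nonempty)
    (cbar : Fin q → ℝ) (hcbar : cbar ∈ intrinsicInterior ℝ C)
    (hcq : cbar (lastIdx q hq) = 1)
    (c : Fin (q + 1) → ℝ) (hc : c = Fin.snoc cbar 0)
    (K : Set (Fin (q + 1) → ℝ))
    (hK : K = {y | ∃ x : Fin n → ℝ, 0 ≤ (Gmat A P Z).mulVec x + (Hmat b Z).mulVec y})
    (F : Set (Fin (q + 1) → ℝ)) (hF : IsFaceOf F K) (hFne : F.Nonempty) :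
    (∀ y ∈ F, ∀ ε : ℝ, 0 < ε → y - ε • c ∉ K) ↔
      ∃ w ∈ ⋂ y ∈ F, {w ∈ polarCone K | w ⬝ᵥ y = 0}, c ⬝ᵥ w < 0 :=
  stmt14_general m n q r A P Z b c K hK F hF hFne
end
end

section
/- Let F* be a nonempty face of K* := K°. The following are equivalent: (i) F* is an (M(R*×{0}))-maximal face of K*, i.e., every w ∈ F* satisfies w − εc* ∉ K* for all ε > 0 (note M(R*×{0}) = cone{−c*}); (ii) there exists y ∈ Γ⁻¹(F*) such that (c*)ᵀy < 0, i.e., y_{q+1} > 0. -/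
open Matrix Set Pointwise

noncomputable section

/-! Pick `w₀` in the relative interior of `F*`. If `w₀ - ε c*` leaves `K°` for every `ε > 0`,
then `c*` is not of the form `s w₀ - w` with `s ≥ 0` and `w ∈ K°`. As `K` is the projection of a
polyhedral cone, the cone of such vectors is finitely generated, hence closed (conic
Carathéodory), and Farkas' lemma yields `y ∈ K` with `yᵀw₀ = 0` and `(c*)ᵀy < 0`. A linear
functional that is nonpositive on the convex set `F*` and vanishes at a relative interior point
vanishes on all of `F*`, so `y ∈ Γ⁻¹(F*)`. The converse is a one-line computation. -/

namespace LinearMap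

variable {ι E : Type*} [Fintype ι] [AddCommGroup E] [Module ℝ E] (f : (ι → ℝ) →ₗ[ℝ] E)

open Classical in
theorem exists_nonneg_map_eq_card_support_lt {u v : ι → ℝ} (hu : 0 ≤ u)
    (hvu : ∀ i, u i = 0 → v i = 0) (hfv : f v = 0) (hv : ∃ i, 0 < v i) :
    ∃ u', 0 ≤ u' ∧ f u' = f u ∧
      (Finset.univ.filter (u' · ≠ 0)).card < (Finset.univ.filter (u · ≠ 0)).card := by
  obtain ⟨i₀, hi₀, hmin⟩ := Finset.exists_min_image (Finset.univ.filter (0 < v ·))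
    (fun i => u i / v i) (by simpa [Finset.filter_nonempty_iff] using hv)
  rw [Finset.mem_filter] at hi₀
  -- the largest step along `-v` that keeps `u` nonnegative; it kills the coordinate `i₀`
  set τ := u i₀ / v i₀
  have hτ : 0 ≤ τ := div_nonneg (hu i₀) hi₀.2.le
  refine ⟨u - τ • v, fun i => ?_, by simp [hfv], Finset.card_lt_card ?_⟩
  · rcases le_or_gt (v i) 0 with hvi | hvi
    · simpa using mul_nonpos_of_nonneg_of_nonpos hτ hvi |>.trans (hu i)
    · have := hmin i (by simpa using hvi)
      simpa [sub_nonneg] using (le_div_iff₀ hvi).1 this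
  · refine Finset.ssubset_iff_of_subset (fun i => ?_) |>.2 ⟨i₀, ?_, ?_⟩
    · simp only [Finset.mem_filter, Finset.mem_univ, true_and]
      exact mt fun h => by simp [h, hvu i h]
    · simpa using fun h => (hvu i₀ h ▸ hi₀.2).false
    · simp [τ, div_mul_cancel₀ _ hi₀.2.ne']

open Classical in
theorem exists_nonneg_map_eq_disjoint_ker {u : ι → ℝ} (hu : 0 ≤ u) :
    ∃ u', 0 ≤ u' ∧ f u' = f u ∧
      Disjoint (LinearMap.ker f) (Submodule.pi {i | u' i = 0} fun _ => ⊥) := by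
  obtain ⟨u', ⟨hu', hfu'⟩, hmin⟩ := (measure fun u' : ι → ℝ =>
    (Finset.univ.filter (u' · ≠ 0)).card).wf.has_min {u' | 0 ≤ u' ∧ f u' = f u} ⟨u, hu, rfl⟩
  refine ⟨u', hu', hfu', Submodule.disjoint_def.2 fun v hfv hvu => ?_⟩
  rw [LinearMap.mem_ker] at hfv
  simp only [Submodule.mem_pi, Set.mem_ofPred_eq, Submodule.mem_bot] at hvu
  by_contra hv
  obtain ⟨i, hi⟩ := Function.ne_iff.1 hv
  have hno_pos : ∀ v : ι → ℝ, (∀ i, u' i = 0 → v i = 0) → f v = 0 → (∃ i, 0 < v i) → False :=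
    fun v hvu hfv hpos => by
      obtain ⟨u'', hu'', hfu'', hlt⟩ := exists_nonneg_map_eq_card_support_lt f hu' hvu hfv hpos
      exact hmin u'' ⟨hu'', hfu''.trans hfu'⟩ hlt
  rcases (show v i ≠ 0 from hi).lt_or_gt with hneg | hpos
  · exact hno_pos (-v) (fun j hj => by simp [hvu j hj]) (by simp [hfv]) ⟨i, by simpa using hneg⟩
  · exact hno_pos v hvu hfv ⟨i, hpos⟩

theorem isClosed_image_nonneg [TopologicalSpace E] [IsTopologicalAddGroup E]
    [ContinuousSMul ℝ E] [T2Space E] : IsClosed (f '' {u | 0 ≤ u}) := by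
  -- a finite union of images of closed sets under injective linear maps
  have hpieces : f '' {u | 0 ≤ u} =
      ⋃ s ∈ {s : Set ι | Disjoint (LinearMap.ker f) (Submodule.pi s fun _ => ⊥)},
        f.domRestrict (Submodule.pi s fun _ => ⊥) '' {v | 0 ≤ (v : ι → ℝ)} := by
    ext x
    simp only [Set.mem_iUnion, Set.mem_image]
    constructor
    · rintro ⟨u, hu, rfl⟩
      obtain ⟨u', hu', hfu', hdisj⟩ := exists_nonneg_map_eq_disjoint_ker f hu
      exact ⟨_, hdisj, ⟨u', by simp [Submodule.mem_pi]⟩, hu', hfu'⟩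
    · rintro ⟨s, -, v, hv, rfl⟩
      exact ⟨v, hv, rfl⟩
  rw [hpieces]
  refine (Set.toFinite _).isClosed_biUnion fun s hs => ?_
  have hinj : LinearMap.ker (f.domRestrict (Submodule.pi s fun _ => ⊥)) = ⊥ :=
    LinearMap.ker_eq_bot'.2 fun v hv => Subtype.ext (Submodule.disjoint_def.1 hs v hv v.2)
  exact (LinearMap.isClosedEmbedding_of_injective hinj).isClosedMap _
    (isClosed_le continuous_const continuous_subtype_val)

end LinearMap

theorem Matrix.exists_nonneg_mulVec_dotProduct_neg {ι κ : Type*} [Fintype ι] [Fintype κ]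
    (N : Matrix ι κ ℝ) {d : κ → ℝ} (hd : ∀ u, 0 ≤ u → u ᵥ* N ≠ d) :
    ∃ a, 0 ≤ N *ᵥ a ∧ d ⬝ᵥ a < 0 := by
  classical
  let C : ProperCone ℝ (κ → ℝ) :=
    { toSubmodule := (PointedCone.positive ℝ (ι → ℝ)).map N.vecMulLinear
      isClosed' := by
        convert N.vecMulLinear.isClosed_image_nonneg using 1
        exact PointedCone.coe_map _ _ }
  have hdC : d ∉ C := by
    rintro ⟨u, hu, hud⟩
    exact hd u hu hud
  obtain ⟨φ, hφC, hφd⟩ := C.hyperplane_separation_point hdC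
  set a : κ → ℝ := fun j => φ fun k => if j = k then 1 else 0
  have hφ : ∀ v, φ v = v ⬝ᵥ a := fun v => by
    simpa [dotProduct] using LinearMap.pi_apply_eq_sum_univ (φ : (κ → ℝ) →ₗ[ℝ] ℝ) v
  refine ⟨a, fun i => ?_, hφ d ▸ hφd⟩
  have hrow : N i ∈ C := ⟨Pi.single i 1, by simp, single_one_vecMul i N⟩
  simpa [mulVec, hφ] using hφC _ hrow

section PolarCone

variable {d : ℕ} {K : Set (Fin d → ℝ)}

theorem add_mem_polarCone {w w' : Fin d → ℝ} (hw : w ∈ polarCone K) (hw' : w' ∈ polarCone K) :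
    w + w' ∈ polarCone K := fun y hy => by
  simpa [add_dotProduct] using add_nonpos (hw y hy) (hw' y hy)

theorem smul_mem_polarCone {w : Fin d → ℝ} {t : ℝ} (ht : 0 ≤ t) (hw : w ∈ polarCone K) :
    t • w ∈ polarCone K := fun y hy => by
  simpa [smul_dotProduct] using mul_nonpos_of_nonneg_of_nonpos ht (hw y hy)

theorem sub_smul_notMem_polarCone {w c y : Fin d → ℝ} (hy : y ∈ K) (hyw : y ⬝ᵥ w = 0)
    (hcy : c ⬝ᵥ y < 0) {ε : ℝ} (hε : 0 < ε) : w - ε • c ∉ polarCone K := fun hw => by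
  have := hw y hy
  rw [sub_dotProduct, smul_dotProduct, dotProduct_comm, hyw, smul_eq_mul] at this
  linarith [mul_neg_of_pos_of_neg hε hcy]

end PolarCone

section ProjectedCone

variable {ι β : Type*} [Fintype ι] [Fintype β] {d : ℕ} (G : Matrix ι β ℝ) (H : Matrix ι (Fin d) ℝ)

def projectedCone : Set (Fin d → ℝ) := {y | ∃ x, 0 ≤ G *ᵥ x + H *ᵥ y}

variable {G H}

theorem neg_vecMul_mem_polarCone_projectedCone {u : ι → ℝ} (hu : 0 ≤ u) (huG : u ᵥ* G = 0) :
    -(u ᵥ* H) ∈ polarCone (projectedCone G H) := by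
  rintro y ⟨x, hx⟩
  have := dotProduct_nonneg_of_nonneg hu hx
  rw [dotProduct_add, dotProduct_mulVec, dotProduct_mulVec, huG, zero_dotProduct, zero_add]
    at this
  simpa using this

theorem exists_mem_projectedCone_of_forall_sub_smul_notMem {w₀ c : Fin d → ℝ}
    (hw₀ : w₀ ∈ polarCone (projectedCone G H))
    (hc : ∀ ε : ℝ, 0 < ε → w₀ - ε • c ∉ polarCone (projectedCone G H)) :
    ∃ y ∈ projectedCone G H, y ⬝ᵥ w₀ = 0 ∧ c ⬝ᵥ y < 0 := by
  -- a Farkas certificate `(y, x)` for the rows of `[H | G]` and `(w₀, 0)` puts `y` in the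
  -- projected cone with `w₀ ⬝ᵥ y ≥ 0`
  let N : Matrix (ι ⊕ Unit) (Fin d ⊕ β) ℝ :=
    fromRows (fromCols H G) (Matrix.of fun _ => Sum.elim w₀ 0)
  have hN : ∀ u, 0 ≤ u → u ᵥ* N ≠ Sum.elim c 0 := by
    intro u hu hN
    obtain ⟨u, t, rfl⟩ : ∃ u₁ t, u = Sum.elim u₁ t := ⟨_, _, (Sum.elim_comp_inl_inr u).symm⟩
    have hH : u ᵥ* H + t () • w₀ = c := funext fun j => by
      simpa [N, vecMul, dotProduct] using congrFun hN (Sum.inl j)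
    have hG : u ᵥ* G = 0 := funext fun j => by
      simpa [N, vecMul, dotProduct] using congrFun hN (Sum.inr j)
    have ht : 0 ≤ t () := hu (Sum.inr ())
    have hεw : w₀ - (1 + t ())⁻¹ • c = (1 + t ())⁻¹ • (w₀ + -(u ᵥ* H)) := by
      rw [← hH]
      match_scalars
      · field_simp
        ring
      · ring
    refine hc _ (by positivity) (hεw ▸ smul_mem_polarCone (by positivity) ?_)
    exact add_mem_polarCone hw₀ (neg_vecMul_mem_polarCone_projectedCone (fun i => hu (.inl i)) hG)
  obtain ⟨a, ha, hca⟩ := N.exists_nonneg_mulVec_dotProduct_neg hN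
  obtain ⟨y, x, rfl⟩ : ∃ y x, a = Sum.elim y x := ⟨_, _, (Sum.elim_comp_inl_inr a).symm⟩
  simp only [N, fromRows_mulVec, fromCols_mulVec_sumElim, Sum.nonneg_elim_iff] at ha
  have hy : y ∈ projectedCone G H := ⟨x, add_comm (H *ᵥ y) _ ▸ ha.1⟩
  have hw₀y : 0 ≤ w₀ ⬝ᵥ y := by simpa [mulVec, sumElim_dotProduct_sumElim] using ha.2 ()
  refine ⟨y, hy, ?_, by simpa [sumElim_dotProduct_sumElim] using hca⟩
  rw [dotProduct_comm]
  exact le_antisymm (hw₀ y hy) hw₀y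

end ProjectedCone

section IntrinsicInterior

variable {E : Type*} [AddCommGroup E] [Module ℝ E] [TopologicalSpace E] [IsTopologicalAddGroup E]
  [ContinuousSMul ℝ E] {s : Set E} {w₀ w : E}

theorem exists_one_lt_lineMap_mem_of_mem_intrinsicInterior (hw₀ : w₀ ∈ intrinsicInterior ℝ s)
    (hw : w ∈ s) : ∃ τ : ℝ, 1 < τ ∧ AffineMap.lineMap w w₀ τ ∈ s := by
  obtain ⟨p, hp, rfl⟩ := mem_intrinsicInterior.1 hw₀
  let g : ℝ → affineSpan ℝ s := fun τ =>
    ⟨AffineMap.lineMap w p τ, AffineMap.lineMap_mem τ (subset_affineSpan ℝ s hw) p.2⟩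
  have hg : Continuous g := AffineMap.lineMap_continuous.subtype_mk _
  have hg1 : g 1 = p := Subtype.ext (AffineMap.lineMap_apply_one _ _)
  have hU : g ⁻¹' interior ((↑) ⁻¹' s) ∈ nhds (1 : ℝ) :=
    hg.continuousAt.preimage_mem_nhds (hg1 ▸ isOpen_interior.mem_nhds hp)
  obtain ⟨τ, hτ, hτU⟩ := Filter.nonempty_of_mem (Filter.inter_mem self_mem_nhdsWithin
    (nhdsWithin_le_nhds hU) : _ ∈ nhdsWithin (1 : ℝ) (Set.Ioi 1))
  exact ⟨τ, hτ, interior_subset (s := (Subtype.val ⁻¹' s : Set (affineSpan ℝ s))) hτU⟩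

theorem eq_zero_of_mem_intrinsicInterior_of_forall_nonpos (hw₀ : w₀ ∈ intrinsicInterior ℝ s)
    (f : E →ₗ[ℝ] ℝ) (hf : ∀ w ∈ s, f w ≤ 0) (hfw₀ : f w₀ = 0) (hw : w ∈ s) : f w = 0 := by
  obtain ⟨τ, hτ, hτs⟩ := exists_one_lt_lineMap_mem_of_mem_intrinsicInterior hw₀ hw
  have := hf _ hτs
  rw [AffineMap.lineMap_apply_module, map_add, map_smul, map_smul, hfw₀, smul_eq_mul,
    smul_zero, add_zero] at this
  nlinarith [hf w hw]

end IntrinsicInterior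

theorem stmt15_general
    (m n q r : ℕ)
    (A : Matrix (Fin m) (Fin n) ℝ) (P : Matrix (Fin q) (Fin n) ℝ)
    (Z : Matrix (Fin q) (Fin r) ℝ) (b : Fin m → ℝ)
    (cstar : Fin (q + 1) → ℝ)
    (K : Set (Fin (q + 1) → ℝ))
    (hK : K = {y | ∃ x : Fin n → ℝ, 0 ≤ (Gmat A P Z).mulVec x + (Hmat b Z).mulVec y})
    (Fstar : Set (Fin (q + 1) → ℝ)) (hFs : IsFaceOf Fstar (polarCone K))
    (hFsne : Fstar.Nonempty) :
    (∀ w ∈ Fstar, ∀ ε : ℝ, 0 < ε → w - ε • cstar ∉ polarCone K) ↔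
      ∃ y ∈ ⋂ w ∈ Fstar, {y ∈ K | y ⬝ᵥ w = 0}, cstar ⬝ᵥ y < 0 := by
  change K = projectedCone (Gmat A P Z) (Hmat b Z) at hK
  subst hK
  obtain ⟨hconv, hsub, -⟩ := hFs
  refine ⟨fun hmax => ?_, ?_⟩
  · obtain ⟨w₀, hw₀⟩ := hFsne.intrinsicInterior hconv
    have hw₀F : w₀ ∈ Fstar := intrinsicInterior_subset hw₀
    obtain ⟨y, hy, hyw₀, hcy⟩ :=
      exists_mem_projectedCone_of_forall_sub_smul_notMem (hsub hw₀F) (hmax w₀ hw₀F)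
    refine ⟨y, mem_iInter₂.2 fun w hw => ⟨hy, ?_⟩, hcy⟩
    refine eq_zero_of_mem_intrinsicInterior_of_forall_nonpos hw₀ (dotProductBilin ℝ ℝ y)
      (fun w hw => ?_) hyw₀ hw
    simpa [dotProduct_comm] using hsub hw y hy
  · rintro ⟨y, hy, hcy⟩ w hw ε hε
    obtain ⟨hyK, hyw⟩ := mem_iInter₂.1 hy w hw
    exact sub_smul_notMem_polarCone hyK hyw hcy hε

/-- A nonempty face `F*` of `K* = K°` is `(M(R*×{0}))`-maximal iff some
`y ∈ Γ⁻¹(F*)` satisfies `(c*)ᵀy < 0`. -/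
theorem stmt15
    (m n q r : ℕ) (hm : 0 < m) (hn : 0 < n) (hq : 0 < q) (hr : 0 < r)
    (A : Matrix (Fin m) (Fin n) ℝ) (P : Matrix (Fin q) (Fin n) ℝ)
    (Z : Matrix (Fin q) (Fin r) ℝ) (b : Fin m → ℝ)
    (C : Set (Fin q → ℝ)) (hC : C = {y | 0 ≤ Zᵀ.mulVec y})
    (hCpointed : C ∩ -C = {0}) (hCnontriv : C ≠ {0})
    (S : Set (Fin n → ℝ)) (hS : S = {x | b ≤ A.mulVec x}) (hSne : S.Nonempty)
    (cbar : Fin q → ℝ) (hcbar : cbar ∈ intrinsicInterior ℝ C)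
    (hcq : cbar (lastIdx q hq) = 1)
    (cstar : Fin (q + 1) → ℝ) (hcstar : cstar = fun i => if i = Fin.last q then -1 else 0)
    (K : Set (Fin (q + 1) → ℝ))
    (hK : K = {y | ∃ x : Fin n → ℝ, 0 ≤ (Gmat A P Z).mulVec x + (Hmat b Z).mulVec y})
    (Fstar : Set (Fin (q + 1) → ℝ)) (hFs : IsFaceOf Fstar (polarCone K))
    (hFsne : Fstar.Nonempty) :
    (∀ w ∈ Fstar, ∀ ε : ℝ, 0 < ε → w - ε • cstar ∉ polarCone K) ↔
      ∃ y ∈ ⋂ w ∈ Fstar, {y ∈ K | y ⬝ᵥ w = 0}, cstar ⬝ᵥ y < 0 :=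
  stmt15_general m n q r A P Z b cstar K hK Fstar hFs hFsne
end
end

section
/- Let G ∈ ℝ^{k×n} and H ∈ ℝ^{k×p}, and let K := {y ∈ ℝ^p : ∃x ∈ ℝ^n, Gx + Hy ≥ 0}. Then {w ∈ ℝ^p : ∃u ∈ ℝ^k, u ≥ 0, w = −Hᵀu, Gᵀu = 0} = K° := {w ∈ ℝ^p : ∀y ∈ K, wᵀy ≤ 0}. -/
/-!
If `w ∈ K°`, then `(0, -w)` pairs nonnegatively with every `(x, y)` satisfying `Gx + Hy ≥ 0`, so by
Farkas' lemma for the matrix `[G H]` it is a nonnegative combination `[G H]ᵀu` of the rows, which is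
exactly `Gᵀu = 0`, `w = -Hᵀu`. Farkas' lemma comes from separating a point from the cone spanned by
finitely many vectors; that cone is closed because, by the conic Carathéodory theorem, it is a
finite union of simplicial cones, each the image of an orthant under an injective linear map.
The other inclusion is weak duality: `uᵀ(Gx + Hy) ≥ 0` and `uᵀGx = (Gᵀu)ᵀx = 0`.
-/

open Matrix Set Pointwise

noncomputable section

namespace PointedCone

section Caratheodory

variable {𝕜 E : Type*} [Field 𝕜] [LinearOrder 𝕜] [IsStrictOrderedRing 𝕜]
  [AddCommGroup E] [Module 𝕜 E]

theorem mem_hull_finset {t : Finset E} {x : E} :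
    x ∈ hull 𝕜 (t : Set E) ↔ ∃ f : E → 𝕜, (∀ e ∈ t, 0 ≤ f e) ∧ ∑ e ∈ t, f e • e = x := by
  constructor
  · intro hx
    obtain ⟨f, -, rfl⟩ := Submodule.mem_span_finset.1 hx
    exact ⟨fun e => f e, fun e _ => (f e).2, by simp only [Nonneg.coe_smul]⟩
  · rintro ⟨f, hf, rfl⟩
    exact Submodule.sum_mem _ fun e he => smul_mem _ (hf e he) (subset_hull he)

theorem mem_hull_erase_of_not_linearIndepOn [DecidableEq E] {t : Finset E}
    (h : ¬LinearIndepOn 𝕜 id (t : Set E)) {x : E} (hx : x ∈ hull 𝕜 (t : Set E)) :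
    ∃ y ∈ t, x ∈ hull 𝕜 (t.erase y : Set E) := by
  obtain ⟨f, hf, rfl⟩ := mem_hull_finset.1 hx
  obtain ⟨g, hg, hpos⟩ : ∃ g : E → 𝕜, ∑ e ∈ t, g e • e = 0 ∧ ∃ e ∈ t, 0 < g e := by
    obtain ⟨g, hg, i, hi, hgi⟩ := not_linearIndepOn_finset_iff.1 h
    rcases hgi.lt_or_gt with hneg | hpos
    · refine ⟨-g, by simpa [neg_smul, Finset.sum_neg_distrib] using hg, i, hi, by simpa using hneg⟩
    · exact ⟨g, hg, i, hi, hpos⟩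
  obtain ⟨i₀, hi₀, hmin⟩ := ({e ∈ t | 0 < g e}).exists_min_image (fun e => f e / g e)
    (by simpa [Finset.Nonempty] using hpos)
  rw [Finset.mem_filter] at hi₀
  -- `i₀` minimises `f / g` where `g > 0`, so subtracting `(f i₀ / g i₀) • g` kills the coefficient
  -- of `i₀` and keeps all others nonnegative.
  set k : E → 𝕜 := fun e => f e - f i₀ / g i₀ * g e
  have hk₀ : k i₀ = 0 := by simp [k, hi₀.2.ne']
  refine ⟨i₀, hi₀.1, mem_hull_finset.2 ⟨k, fun e he => ?_, ?_⟩⟩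
  · have he := Finset.mem_of_mem_erase he
    rcases le_or_gt (g e) 0 with hge | hge
    · have : 0 ≤ f i₀ / g i₀ := div_nonneg (hf i₀ hi₀.1) hi₀.2.le
      nlinarith [hf e he]
    · have := hmin e (Finset.mem_filter.2 ⟨he, hge⟩)
      rw [div_le_div_iff₀ hi₀.2 hge] at this
      simp only [k, sub_nonneg, div_mul_eq_mul_div, div_le_iff₀ hi₀.2]
      linarith
  · calc ∑ e ∈ t.erase i₀, k e • e = ∑ e ∈ t, k e • e :=
          Finset.sum_erase _ (by rw [hk₀, zero_smul])
      _ = ∑ e ∈ t, f e • e := by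
          simp only [k, sub_smul, mul_smul, Finset.sum_sub_distrib, ← Finset.smul_sum, hg,
            smul_zero, sub_zero]

theorem exists_linearIndepOn_subset_of_mem_hull {t : Finset E} {x : E}
    (hx : x ∈ hull 𝕜 (t : Set E)) :
    ∃ u ⊆ t, LinearIndepOn 𝕜 id (u : Set E) ∧ x ∈ hull 𝕜 (u : Set E) := by
  classical
  induction t using Finset.strongInduction with
  | H t ih =>
    by_cases hli : LinearIndepOn 𝕜 id (t : Set E)
    · exact ⟨t, subset_rfl, hli, hx⟩
    obtain ⟨y, hy, hxy⟩ := mem_hull_erase_of_not_linearIndepOn hli hx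
    obtain ⟨u, hu, hli, hxu⟩ := ih _ (Finset.erase_ssubset hy) hxy
    exact ⟨u, hu.trans (Finset.erase_subset y t), hli, hxu⟩

theorem hull_finset_eq_biUnion (t : Finset E) :
    (hull 𝕜 (t : Set E) : Set E) =
      ⋃ u ∈ {u : Finset E | u ⊆ t ∧ LinearIndepOn 𝕜 id (u : Set E)}, hull 𝕜 (u : Set E) := by
  ext x
  simp only [SetLike.mem_coe, Set.mem_iUnion, Set.mem_ofPred_eq, exists_prop]
  constructor
  · intro hx
    obtain ⟨u, hu, hli, hxu⟩ := exists_linearIndepOn_subset_of_mem_hull hx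
    exact ⟨u, ⟨hu, hli⟩, hxu⟩
  · rintro ⟨u, ⟨hu, -⟩, hxu⟩
    exact Submodule.span_mono (by exact_mod_cast hu) hxu

end Caratheodory

section Closed

variable {E : Type*} [AddCommGroup E] [Module ℝ E] [TopologicalSpace E]
  [IsTopologicalAddGroup E] [ContinuousSMul ℝ E] [T2Space E]

theorem IsSimplicial.isClosed {C : PointedCone ℝ E} (hC : C.IsSimplicial) :
    IsClosed (C : Set E) := by
  obtain ⟨s, hs, hli, rfl⟩ := hC
  have := hs.fintype
  set L := Fintype.linearCombination ℝ ((↑) : s → E)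
  have hL : Topology.IsClosedEmbedding L :=
    LinearMap.isClosedEmbedding_of_injective
      (LinearMap.ker_eq_bot.2 hli.fintypeLinearCombination_injective)
  have hhull : (hull ℝ s : Set E) = L '' Set.Ici 0 := by
    ext x
    simp only [SetLike.mem_coe, Submodule.mem_span_iff_of_fintype, Set.mem_image, Set.mem_Ici,
      L, Fintype.linearCombination_apply]
    constructor
    · rintro ⟨f, rfl⟩
      exact ⟨fun a => f a, fun a => (f a).2, by simp only [Nonneg.coe_smul]⟩
    · rintro ⟨f, hf, rfl⟩
      exact ⟨fun a => ⟨f a, hf a⟩, by simp only [← Nonneg.coe_smul]⟩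
  rw [hhull]
  exact hL.isClosedMap _ isClosed_Ici

theorem isClosed_of_fg {C : PointedCone ℝ E} (hC : C.FG) : IsClosed (C : Set E) := by
  obtain ⟨t, rfl⟩ := hC
  rw [hull_finset_eq_biUnion]
  refine Set.Finite.isClosed_biUnion ?_ fun u hu => (IsSimplicial.hull u.finite_toSet hu.2).isClosed
  exact t.powerset.finite_toSet.subset fun u hu => Finset.mem_powerset.2 hu.1

end Closed

end PointedCone

theorem Matrix.exists_nonneg_transpose_mulVec_eq {m ι : Type*} [Fintype m] [Fintype ι]
    (A : Matrix m ι ℝ) (b : ι → ℝ) (h : ∀ z, 0 ≤ A *ᵥ z → 0 ≤ b ⬝ᵥ z) :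
    ∃ u, 0 ≤ u ∧ Aᵀ *ᵥ u = b := by
  by_contra hb
  have hbC : b ∉ PointedCone.hull ℝ (Set.range A) := fun hmem => by
    obtain ⟨c, hc⟩ := (Submodule.mem_span_range_iff_exists_fun _).1 hmem
    exact hb ⟨fun i => c i, fun i => (c i).2, by
      simp only [mulVec_transpose, vecMul_eq_sum, ← hc, Nonneg.coe_smul]⟩
  obtain ⟨f, hfA, hfb⟩ := ProperCone.hyperplane_separation_point
    ⟨_, PointedCone.isClosed_of_fg (Submodule.fg_span (Set.finite_range A))⟩ hbC
  classical
  set z : ι → ℝ := fun j => f (Pi.single j 1)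
  have hfz : ∀ y, f y = y ⬝ᵥ z := fun y => by
    conv_lhs => rw [← Finset.univ_sum_single y]
    simp only [map_sum, dotProduct, z]
    refine Finset.sum_congr rfl fun j _ => ?_
    rw [← smul_eq_mul, ← map_smul, ← Pi.single_smul, smul_eq_mul, mul_one]
  have hz : 0 ≤ A *ᵥ z := fun i => by
    show 0 ≤ A i ⬝ᵥ z
    exact hfz (A i) ▸ hfA (A i) (PointedCone.subset_hull ⟨i, rfl⟩)
  exact (h z hz).not_gt (hfz b ▸ hfb)

/-- Farkas-type duality: the cone `{−Hᵀu : Gᵀu = 0, u ≥ 0}` is the polar of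
the projected cone `K = {y : ∃x, Gx + Hy ≥ 0}`. -/
theorem stmt19 (k n p : ℕ) (G : Matrix (Fin k) (Fin n) ℝ) (H : Matrix (Fin k) (Fin p) ℝ)
    (K : Set (Fin p → ℝ))
    (hK : K = {y | ∃ x : Fin n → ℝ, 0 ≤ G.mulVec x + H.mulVec y}) :
    {w : Fin p → ℝ | ∃ u : Fin k → ℝ, 0 ≤ u ∧ w = -(Hᵀ.mulVec u) ∧ Gᵀ.mulVec u = 0}
      = {w : Fin p → ℝ | ∀ y ∈ K, w ⬝ᵥ y ≤ 0} := by
  subst hK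
  ext w
  constructor
  · rintro ⟨u, hu, rfl, hGu⟩ y ⟨x, hxy⟩
    have hux : u ⬝ᵥ G *ᵥ x = 0 := by
      rw [dotProduct_mulVec, ← mulVec_transpose, hGu, zero_dotProduct]
    have hnonneg := dotProduct_nonneg_of_nonneg hu hxy
    rw [dotProduct_add, hux, zero_add, dotProduct_mulVec, ← mulVec_transpose] at hnonneg
    simpa only [neg_dotProduct, neg_nonpos] using hnonneg
  · intro hw
    obtain ⟨u, hu, hGH⟩ := (fromCols G H).exists_nonneg_transpose_mulVec_eq (Sum.elim 0 (-w))
      fun z hz => by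
        rw [← Sum.elim_comp_inl_inr z, fromCols_mulVec_sumElim] at hz
        rw [← Sum.elim_comp_inl_inr z, sumElim_dotProduct_sumElim, zero_dotProduct, zero_add,
          neg_dotProduct, neg_nonneg]
        exact hw _ ⟨_, hz⟩
    rw [transpose_fromCols, fromRows_mulVec] at hGH
    have hG : Gᵀ *ᵥ u = 0 := by simpa using congrArg (· ∘ Sum.inl) hGH
    have hH : Hᵀ *ᵥ u = -w := by simpa using congrArg (· ∘ Sum.inr) hGH
    exact ⟨u, hu, by rw [hH, neg_neg], hG⟩
end
end
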